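/- Let $Q_n$ be the $n\times n$ symmetric tridiagonal matrix with entries $(Q_n)_{ii} = p_i + p_{i+1}$, $(Q_n)_{i,i+1} = (Q_n)_{i+1,i} = p_{i+1}$, and zero elsewhere, where $p_1,\dots,p_{n+1}$ are commuting variables (or integers). Then $\det(Q_n) = s_n(p_1,\dots,p_{n+1})$, the $n$-th elementary symmetric polynomial in $p_1,\dots,p_{n+1}$. -/

import Mathlib

/-- The `m`-th elementary symmetric polynomial in the variables `x 0, …, x (N-1)`. -/
def esymm (N m : ℕ) (x : ℕ → ℤ) : ℤ :=
  ∑ t ∈ (Finset.range N).powersetCard m, ∏ j ∈ t, x j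

/-- The symmetric tridiagonal matrix `Q n` with diagonal `p i + p (i+1)` and
off-diagonal entries `p (max i j)` (0-indexed, so `(Q)_{i,i+1} = (Q)_{i+1,i} = p (i+1)`). -/
def Qmat (n : ℕ) (p : ℕ → ℤ) : Matrix (Fin n) (Fin n) ℤ :=
  Matrix.of fun i j =>
    if (i : ℕ) = j then p i + p (i + 1)
    else if (i : ℕ) + 1 = j then p ((i : ℕ) + 1)
    else if (j : ℕ) + 1 = i then p ((j : ℕ) + 1)
    else 0

/-!
Both sides satisfy the continuant recurrence
`D (n+2) = (p (n+1) + p (n+2)) * D (n+1) - p (n+1)^2 * D n` and agree for `n = 0, 1`.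
For the determinant this is the Laplace expansion of a tridiagonal matrix along its last row;
for `e_n(p 0, …, p n)` it follows from `e_{k+1}(p 0, …, p N) = e_{k+1}(p 0, …, p (N-1)) + p N * e_k(p 0, …, p (N-1))`
together with `e_N(p 0, …, p (N-1)) = p 0 ⋯ p (N-1)`.
-/

open Matrix

theorem Multiset.esymm_cons {R : Type*} [CommSemiring R] (a : R) (s : Multiset R) (k : ℕ) :
    (a ::ₘ s).esymm (k + 1) = s.esymm (k + 1) + a * s.esymm k := by
  simp [Multiset.esymm, Multiset.powersetCard_cons, Multiset.sum_map_mul_left]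

theorem Matrix.det_succ_succ_of_lastRow_lastCol_eq_zero {R : Type*} [CommRing R] {n : ℕ}
    (M : Matrix (Fin (n + 2)) (Fin (n + 2)) R)
    (hrow : ∀ j : Fin n, M (Fin.last _) j.castSucc.castSucc = 0)
    (hcol : ∀ i : Fin n, M i.castSucc.castSucc (Fin.last _) = 0) :
    M.det = M (Fin.last _) (Fin.last _) * (M.submatrix Fin.castSucc Fin.castSucc).det
      - M (Fin.last _) (Fin.last n).castSucc * M (Fin.last n).castSucc (Fin.last _)
        * (M.submatrix (Fin.castSucc ∘ Fin.castSucc) (Fin.castSucc ∘ Fin.castSucc)).det := by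
  rw [det_succ_row _ (Fin.last _), Fin.sum_univ_castSucc, Fin.sum_univ_castSucc,
    Finset.sum_eq_zero fun j _ => by rw [hrow j, mul_zero, zero_mul]]
  -- the minor of the entry `(last, last - 1)` has a single nonzero entry in its last column
  rw [det_succ_column _ (Fin.last n), Fin.sum_univ_castSucc,
    Finset.sum_eq_zero fun i _ => by simp [hcol i]]
  simp [Fin.succAbove_last, Function.comp_def]
  ring

theorem esymm_eq_multiset_esymm (N m : ℕ) (x : ℕ → ℤ) :
    esymm N m x = ((Multiset.range N).map x).esymm m :=
  (Finset.esymm_map_val x (Finset.range N) m).symm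

theorem esymm_succ_succ (N k : ℕ) (x : ℕ → ℤ) :
    esymm (N + 1) (k + 1) x = esymm N (k + 1) x + x N * esymm N k x := by
  simp only [esymm_eq_multiset_esymm, Multiset.range_succ, Multiset.map_cons,
    Multiset.esymm_cons]

theorem esymm_self (N : ℕ) (x : ℕ → ℤ) : esymm N N x = ∏ j ∈ Finset.range N, x j := by
  simpa [esymm] using
    congrArg (∑ t ∈ ·, ∏ j ∈ t, x j) (Finset.powersetCard_self (Finset.range N))

theorem esymm_add_three (n : ℕ) (x : ℕ → ℤ) :
    esymm (n + 3) (n + 2) x =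
      (x (n + 1) + x (n + 2)) * esymm (n + 2) (n + 1) x
        - x (n + 1) * x (n + 1) * esymm (n + 1) n x := by
  have h₁ := esymm_succ_succ (n + 2) (n + 1) x
  have h₂ := esymm_succ_succ (n + 1) n x
  have h₃ : esymm (n + 2) (n + 2) x = x (n + 1) * esymm (n + 1) (n + 1) x := by
    rw [esymm_self, esymm_self, Finset.prod_range_succ, mul_comm]
  linear_combination h₁ + h₃ - x (n + 1) * h₂

theorem det_Qmat_add_two (n : ℕ) (p : ℕ → ℤ) :
    (Qmat (n + 2) p).det =
      (p (n + 1) + p (n + 2)) * (Qmat (n + 1) p).det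
        - p (n + 1) * p (n + 1) * (Qmat n p).det := by
  have hrow (j : Fin n) : Qmat (n + 2) p (Fin.last _) j.castSucc.castSucc = 0 := by
    simp [Qmat]; omega
  have hcol (i : Fin n) : Qmat (n + 2) p i.castSucc.castSucc (Fin.last _) = 0 := by
    simp [Qmat]; omega
  rw [det_succ_succ_of_lastRow_lastCol_eq_zero _ hrow hcol]
  -- the leading principal submatrices of `Qmat` are again `Qmat`s
  change _ * (Qmat (n + 1) p).det - _ * (Qmat n p).det = _
  simp [Qmat, show n + 1 + 1 ≠ n by omega]

/-- `det (Q n) = s_n(p_1, …, p_{n+1})`, the `n`-th elementary symmetric polynomial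
in the `n+1` variables `p 0, …, p n`. -/
theorem det_Qmat_eq_esymm (n : ℕ) (p : ℕ → ℤ) :
    (Qmat n p).det = esymm (n + 1) n p := by
  induction n using Nat.twoStepInduction with
  | zero => simp [esymm]
  | one =>
    rw [det_fin_one, esymm_succ_succ 1 0, esymm_self]
    simp [Qmat, esymm]
  | more n ih₁ ih₂ => rw [det_Qmat_add_two, ih₁, ih₂, esymm_add_three]
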